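/- Let (Ω, F, P) be a probability space, (X, ‖·‖_X) a Banach space, and u : Ω × ℝ≥0 → X a stochastic process such that for each t ≥ 0 the map ω ↦ ‖u(ω,t)‖_X is measurable. Fix ε > 0. Assume: (1) for P-almost every ω there exists A(ω) < ∞ and an increasing function φ : ℝ≥0 → ℝ≥0 such that ‖u(ω,t) − u(ω,t')‖_X ≤ A(ω) φ(t) whenever t, t' ≥ 0 and |t − t'| ≤ 1; (2) there exist increasing functions ψ, λ : ℝ≥0 → ℝ≥0, with ψ a bijection of ℝ≥0 onto ℝ≥0 (so that its inverse ψ⁻¹ exists and is increasing), such that the ensemble bound E[ψ(‖u(·,t)‖_X)] ≤ λ(t) holds for all t ≥ 0. Then for P-almost every ω there exists a constant C(ω) < ∞ such that ‖u(ω,t)‖_X ≤ C(ω) · ( φ(t) + ψ⁻¹( λ(t) · (1+t)^{1+ε} ) ) for all t ≥ 0. -/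

import Mathlib

/-!
By Markov's inequality, `ψ(‖u(n)‖) > λ(n)(1+n)^{1+ε}` has probability at most `(1+n)^{-1-ε}`,
which is summable, so by Borel–Cantelli almost surely `‖u(n)‖ ≤ ψ⁻¹(λ(n)(1+n)^{1+ε})` for all
large integers `n`. A random constant absorbs the finitely many remaining integers, except where
the right-hand side vanishes; there `λ(n) = 0`, so `u(n) = 0` almost surely. The increment bound
then passes from `⌊t⌋` to `t`.
-/

open MeasureTheory NNReal

section

open Filter Asymptotics
open scoped ENNReal

variable {α : Type*} [MeasurableSpace α] {μ : Measure α}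

/-- The strict inequality is what makes this hold at `c = 0`, where `0 / 0 = 0` in `ℝ≥0∞`. -/
theorem meas_lt_le_lintegral_div {f : α → ℝ≥0∞} (hf : AEMeasurable f μ) (c : ℝ≥0∞) :
    μ {a | c < f a} ≤ (∫⁻ a, f a ∂μ) / c := by
  rcases eq_or_ne c 0 with rfl | hc
  · rcases eq_or_ne (∫⁻ a, f a ∂μ) 0 with hint | hint
    · rw [hint, ENNReal.zero_div, nonpos_iff_eq_zero]
      simpa [pos_iff_ne_zero, EventuallyEq, ae_iff] using
        (lintegral_eq_zero_iff' hf).1 hint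
    · simp [ENNReal.div_zero hint]
  rcases eq_or_ne c ⊤ with rfl | hc'
  · simp
  exact (measure_mono fun a (ha : c < f a) => ha.le).trans (meas_ge_le_lintegral_div hf hc hc')

theorem ae_eventually_le_of_tsum_lintegral_div_ne_top {f : ℕ → α → ℝ≥0∞}
    (hf : ∀ n, AEMeasurable (f n) μ) {c : ℕ → ℝ≥0∞} (h : ∑' n, (∫⁻ a, f n a ∂μ) / c n ≠ ⊤) :
    ∀ᵐ a ∂μ, ∀ᶠ n in atTop, f n a ≤ c n := by
  have hsum : ∑' n, μ {a | c n < f n a} ≠ ⊤ :=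
    ne_top_of_le_ne_top h (ENNReal.tsum_le_tsum fun n => meas_lt_le_lintegral_div (hf n) _)
  filter_upwards [ae_eventually_notMem hsum] with a ha
  filter_upwards [ha] with n hn
  exact not_lt.1 hn

theorem ae_eventually_le_mul_of_lintegral_le {f : ℕ → α → ℝ≥0∞}
    (hf : ∀ n, AEMeasurable (f n) μ) {lam w : ℕ → ℝ≥0} (hlam : ∀ n, ∫⁻ a, f n a ∂μ ≤ lam n)
    (hw : ∑' n, (w n : ℝ≥0∞)⁻¹ ≠ ⊤) :
    ∀ᵐ a ∂μ, ∀ᶠ n in atTop, f n a ≤ (lam n * w n : ℝ≥0) := by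
  refine ae_eventually_le_of_tsum_lintegral_div_ne_top hf (ne_top_of_le_ne_top hw ?_)
  refine ENNReal.tsum_le_tsum fun n => (ENNReal.div_le_div_right (hlam n) _).trans ?_
  rw [ENNReal.coe_mul, div_eq_mul_inv,
    ENNReal.mul_inv (Or.inr ENNReal.coe_ne_top) (Or.inl ENNReal.coe_ne_top), ← mul_assoc]
  exact mul_le_of_le_one_left zero_le (ENNReal.mul_inv_le_one _)

theorem ae_forall_eq_zero_of_lintegral_le {f : ℕ → α → ℝ≥0∞} (hf : ∀ n, AEMeasurable (f n) μ)
    {lam : ℕ → ℝ≥0∞} (hlam : ∀ n, ∫⁻ a, f n a ∂μ ≤ lam n) :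
    ∀ᵐ a ∂μ, ∀ n, lam n = 0 → f n a = 0 := by
  refine ae_all_iff.2 fun n => ?_
  by_cases hn : lam n = 0
  · filter_upwards [(lintegral_eq_zero_iff' (hf n)).1 (le_zero_iff.1 (hn ▸ hlam n))] with a ha
    exact fun _ => ha
  · exact ae_of_all _ fun a h => absurd h hn

theorem tsum_inv_one_add_rpow_ne_top {p : ℝ} (hp : 1 < p) :
    ∑' n : ℕ, (((1 + (n : ℝ≥0)) ^ p : ℝ≥0) : ℝ≥0∞)⁻¹ ≠ ⊤ := by
  have hpos : ∀ n : ℕ, (1 + (n : ℝ≥0)) ^ p ≠ 0 := fun n => (NNReal.rpow_pos (by positivity)).ne'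
  simp_rw [← ENNReal.coe_inv (hpos _)]
  refine ENNReal.tsum_coe_ne_top_iff_summable.2 ?_
  simpa [add_comm] using (NNReal.summable_nat_add_iff 1).2 (NNReal.summable_rpow_inv.2 hp)

theorem dist_natFloor_le_one (t : ℝ≥0) : dist t ⌊t⌋₊ ≤ 1 := by
  rw [NNReal.dist_eq, abs_le]
  have h1 : ((⌊t⌋₊ : ℝ≥0) : ℝ) ≤ t := by exact_mod_cast Nat.floor_le t.2
  have h2 : (t : ℝ) < ⌊t⌋₊ + 1 := by exact_mod_cast Nat.lt_floor_add_one t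
  push_cast at h1 ⊢
  constructor <;> linarith

theorem exists_norm_le_mul_add_of_natCast_le {X : Type*} [SeminormedAddCommGroup X]
    {f : ℝ≥0 → X} {φ g : ℝ≥0 → ℝ≥0} (hg : Monotone g)
    (hinc : ∃ A : ℝ, ∀ t t' : ℝ≥0, dist t t' ≤ 1 → ‖f t - f t'‖ ≤ A * φ t)
    (hnat : ∃ C : ℝ, ∀ n : ℕ, ‖f n‖ ≤ C * g n) :
    ∃ C : ℝ, ∀ t, ‖f t‖ ≤ C * (φ t + g t) := by
  obtain ⟨A, hA⟩ := hinc
  obtain ⟨C, hC⟩ := hnat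
  refine ⟨max A 0 + max C 0, fun t => ?_⟩
  calc ‖f t‖ ≤ ‖f ⌊t⌋₊‖ + ‖f t - f ⌊t⌋₊‖ := norm_le_norm_add_norm_sub' _ _
    _ ≤ C * g ⌊t⌋₊ + A * φ t := add_le_add (hC _) (hA _ _ (dist_natFloor_le_one t))
    _ ≤ max C 0 * g t + max A 0 * φ t := by
        refine add_le_add (mul_le_mul (le_max_left C 0) ?_ (g _).coe_nonneg (le_max_right C 0))
          (mul_le_mul_of_nonneg_right (le_max_left A 0) (φ t).coe_nonneg)
        exact_mod_cast hg (Nat.floor_le t.2)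
    _ ≤ (max A 0 + max C 0) * (φ t + g t) := by
        nlinarith [mul_nonneg (le_max_right A 0) (g t).coe_nonneg,
          mul_nonneg (le_max_right C 0) (φ t).coe_nonneg]

theorem ae_exists_forall_natCast_norm_le {X : Type*} [SeminormedAddCommGroup X]
    {u : α → ℝ≥0 → X} (hmeas : ∀ t : ℝ≥0, Measurable fun a => ‖u a t‖) {p : ℝ} (hp : 1 < p)
    {ψ ψinv lam : ℝ≥0 → ℝ≥0} (hψ : Monotone ψ) (hψinj : Function.Injective ψ)
    (hψinv : Function.RightInverse ψinv ψ) (hψinvmono : Monotone ψinv)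
    (hens : ∀ t : ℝ≥0, ∫⁻ a, (ψ ‖u a t‖₊ : ℝ≥0∞) ∂μ ≤ lam t) :
    ∀ᵐ a ∂μ, ∃ C : ℝ, ∀ n : ℕ, ‖u a n‖ ≤ C * ψinv (lam n * (1 + n) ^ p) := by
  have hmeas' : ∀ n : ℕ, AEMeasurable (fun a => (ψ ‖u a n‖₊ : ℝ≥0∞)) μ := fun n =>
    (measurable_coe_nnreal_ennreal.comp (hψ.measurable.comp (hmeas n).subtype_mk)).aemeasurable
  have hev := ae_eventually_le_mul_of_lintegral_le hmeas' (fun n => hens n)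
    (tsum_inv_one_add_rpow_ne_top hp)
  have hzero := ae_forall_eq_zero_of_lintegral_le hmeas' (fun n => hens n)
  filter_upwards [hev, hzero] with a hev hzero
  set b : ℕ → ℝ≥0 := fun n => lam n * (1 + n) ^ p
  have hψ0 : ψ 0 = 0 := le_antisymm ((hψ zero_le).trans_eq (hψinv 0)) zero_le
  have hle : ∀ n : ℕ, ψ ‖u a n‖₊ ≤ b n → ‖u a n‖ ≤ ψinv (b n) := fun n h => by
    have := hψinvmono h
    rwa [hψinv.leftInverse_of_injective hψinj] at this
  have hlam : ∀ n : ℕ, ψinv (b n) = 0 → (lam n : ℝ≥0∞) = 0 := fun n h => by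
    have hbn : b n = 0 := by rw [← hψinv (b n), h, hψ0]
    exact_mod_cast (mul_eq_zero.1 hbn).resolve_right (NNReal.rpow_pos (by positivity)).ne'
  have hvanish : ∀ n : ℕ, (ψinv (b n) : ℝ) = 0 → ‖u a n‖ = 0 := fun n h => by
    have hψn : ψ ‖u a n‖₊ = 0 := by exact_mod_cast hzero n (hlam n (by exact_mod_cast h))
    exact (norm_nonneg _).antisymm' (by simpa [h] using hle n (hψn.trans_le zero_le))
  have hbigO : (fun n : ℕ => ‖u a n‖) =O[atTop] fun n => (ψinv (b n) : ℝ) := by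
    refine IsBigO.of_bound 1 ?_
    filter_upwards [hev] with n hn
    simpa using hle n (ENNReal.coe_le_coe.1 hn)
  obtain ⟨C, hC⟩ := (isBigO_nat_atTop_iff hvanish).1 hbigO
  exact ⟨C, fun n => by simpa using hC n⟩

end

theorem stmt1_general {Ω : Type*} [MeasurableSpace Ω] (μ : Measure Ω)
    {X : Type*} [NormedAddCommGroup X]
    (u : Ω → ℝ≥0 → X) (hmeas : ∀ t : ℝ≥0, Measurable fun ω => ‖u ω t‖)
    (ε : ℝ) (hε : 0 < ε)
    (φ : ℝ≥0 → ℝ≥0)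
    (hinc : ∀ᵐ ω ∂μ, ∃ A : ℝ, ∀ t t' : ℝ≥0, dist t t' ≤ 1 →
      ‖u ω t - u ω t'‖ ≤ A * (φ t : ℝ))
    (ψ lam : ℝ≥0 → ℝ≥0) (hψ : Monotone ψ) (hlam : Monotone lam)
    (hψbij : Function.Bijective ψ)
    (ψinv : ℝ≥0 → ℝ≥0) (hψinv : Function.RightInverse ψinv ψ) (hψinvmono : Monotone ψinv)
    (hens : ∀ t : ℝ≥0, ∫⁻ ω, (ψ ‖u ω t‖₊ : ENNReal) ∂μ ≤ (lam t : ENNReal)) :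
    ∀ᵐ ω ∂μ, ∃ C : ℝ, ∀ t : ℝ≥0,
      ‖u ω t‖ ≤ C * ((φ t : ℝ) + (ψinv (lam t * (1 + t) ^ (1 + ε)) : ℝ)) := by
  have hbound : Monotone fun t : ℝ≥0 => ψinv (lam t * (1 + t) ^ (1 + ε)) :=
    hψinvmono.comp fun s t hst =>
      mul_le_mul' (hlam hst) (NNReal.rpow_le_rpow (add_le_add_right hst 1) (by linarith))
  have hnat := ae_exists_forall_natCast_norm_le hmeas (by linarith : 1 < 1 + ε) hψ hψbij.1
    hψinv hψinvmono hens
  filter_upwards [hinc, hnat] with ω hA hC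
  exact exists_norm_le_mul_add_of_natCast_le hbound hA hC

/-- Theorem 1.2 (main abstract result): a pathwise local increment control together with
an ensemble bound `E[ψ(‖u(t)‖)] ≤ λ(t)` yields the pathwise bound
`‖u^ω(t)‖ ≤ C(ω) (φ(t) + ψ⁻¹(λ(t)(1+t)^{1+ε}))`. -/
theorem stmt1 {Ω : Type*} [MeasurableSpace Ω] (μ : Measure Ω) [IsProbabilityMeasure μ]
    {X : Type*} [NormedAddCommGroup X] [NormedSpace ℝ X] [CompleteSpace X]
    (u : Ω → ℝ≥0 → X) (hmeas : ∀ t : ℝ≥0, Measurable fun ω => ‖u ω t‖)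
    (ε : ℝ) (hε : 0 < ε)
    (φ : ℝ≥0 → ℝ≥0) (hφ : Monotone φ)
    (hinc : ∀ᵐ ω ∂μ, ∃ A : ℝ, ∀ t t' : ℝ≥0, dist t t' ≤ 1 →
      ‖u ω t - u ω t'‖ ≤ A * (φ t : ℝ))
    (ψ lam : ℝ≥0 → ℝ≥0) (hψ : Monotone ψ) (hlam : Monotone lam)
    (hψbij : Function.Bijective ψ)
    (ψinv : ℝ≥0 → ℝ≥0) (hψinv : Function.RightInverse ψinv ψ) (hψinvmono : Monotone ψinv)
    (hens : ∀ t : ℝ≥0, ∫⁻ ω, (ψ ‖u ω t‖₊ : ENNReal) ∂μ ≤ (lam t : ENNReal)) :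
    ∀ᵐ ω ∂μ, ∃ C : ℝ, ∀ t : ℝ≥0,
      ‖u ω t‖ ≤ C * ((φ t : ℝ) + (ψinv (lam t * (1 + t) ^ (1 + ε)) : ℝ)) :=
  stmt1_general μ u hmeas ε hε φ hinc ψ lam hψ hlam hψbij ψinv hψinv hψinvmono hens
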